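/- arXiv:2207.09573 — 2 statements merged into one kernel-verified Lean document; each statement's English description precedes it below -/
import Mathlib

section
/- (Lemma, part (i)) Let $Y(x',x,\theta) := E_{R_\theta}(p_2 \mid p_1 = x_1)$, the sampling regression curve evaluated at the first coordinate $x_1$ of the new observation. Then for every $n \in \mathbb{N}$, the regression curve of $p_2$ on $p_1$ with respect to the posterior predictive distribution based on the first $n$ observations equals a conditional expectation under $\Pi_{\mathbb{N}}$: $E_{(R^*_{n,x'_{(n)}})^R}(p_2 \mid p_1 = x_1) = E_{\Pi_{\mathbb{N}}}\big(Y \,\big|\, (\pi'_{(n),\mathbb{N}}, \pi_{1,\mathbb{N}}) = (x'_{(n)}, x_1)\big)$, $\Pi_{\mathbb{N}}$-almost everywhere. -/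
open MeasureTheory ProbabilityTheory Filter
open scoped ENNReal

/-- The joint distribution `Π_m` of the sample (of shape `α`), a new observation and the
parameter: `Π_m(A' × A × T) = ∫_T R_θ(A) S_θ(A') dQ(θ)`. -/
noncomputable def PiM {Θ Ω₁ Ω₂ α : Type*} [MeasurableSpace Θ] [MeasurableSpace Ω₁]
    [MeasurableSpace Ω₂] [MeasurableSpace α]
    (Q : Measure Θ) (S : Kernel Θ α) (R : Kernel Θ (Ω₁ × Ω₂)) :
    Measure (α × (Ω₁ × Ω₂) × Θ) :=
  (Q ⊗ₘ (S ×ₖ R)).map fun p => (p.2.1, p.2.2, p.1)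

/-- `g` is (a version of) the regression curve of the second coordinate `p₂` on the first
coordinate `p₁` under the distribution `ν` on `Ω₁ × ℝ`, i.e. `g x₁ = E_ν(p₂ | p₁ = x₁)`. -/
def IsRegCurve {Ω₁ : Type*} [MeasurableSpace Ω₁] (ν : Measure (Ω₁ × ℝ)) (g : Ω₁ → ℝ) : Prop :=
  Integrable (fun x : Ω₁ × ℝ => x.2) ν ∧
  ∀ A₁ : Set Ω₁, MeasurableSet A₁ →
    ∫ x in Prod.fst ⁻¹' A₁, x.2 ∂ν = ∫ x in Prod.fst ⁻¹' A₁, g x.1 ∂ν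

/-- `post` is a posterior distribution for the prior `Q` and the sampling kernel `S`. -/
def IsPosterior {Θ α : Type*} [MeasurableSpace Θ] [MeasurableSpace α]
    (Q : Measure Θ) (S : Kernel Θ α) (post : Kernel α Θ) : Prop :=
  ∀ (A' : Set α) (T : Set Θ), MeasurableSet A' → MeasurableSet T →
    ∫⁻ θ in T, S θ A' ∂Q = ∫⁻ x' in A', post x' T ∂(Q.bind fun θ => S θ)

/-! Both sides are versions of `E_Π(p₂(x) | x'_(n), x₁)`. Under `Π` the pair `(x'_(n), x)` has
law `μₙ ⊗ (posterior predictive)`, because the posterior disintegrates `Q ⊗ Rⁿ`, so the regression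
curve of the posterior predictive evaluated at `(x'_(n), x₁)` is that conditional expectation.
Given `(x'_(n), θ)` the new observation has law `R_θ`, so likewise
`Y = E_Π(p₂(x) | x'_(n), θ, x₁)`, and the tower property removes `θ`. -/

open Set

section Truncation

variable {α : Type*} [MeasurableSpace α] {ν : Measure α} {G f : α → ℝ}

lemma lintegral_enorm_le_of_integral_eq (hG : Integrable G ν) (hG0 : 0 ≤ᵐ[ν] G)
    (h : ∫ x, G x ∂ν = ∫ x, f x ∂ν) : ∫⁻ x, ‖G x‖ₑ ∂ν ≤ ∫⁻ x, ‖f x‖ₑ ∂ν :=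
  calc ∫⁻ x, ‖G x‖ₑ ∂ν = ∫⁻ x, ENNReal.ofReal (G x) ∂ν :=
        lintegral_congr_ae (hG0.mono fun _ hx => Real.enorm_of_nonneg hx)
    _ = ENNReal.ofReal (∫ x, f x ∂ν) := by rw [← h, ofReal_integral_eq_lintegral_ofReal hG hG0]
    _ ≤ ‖∫ x, f x ∂ν‖ₑ := Real.ofReal_le_enorm _
    _ ≤ ∫⁻ x, ‖f x‖ₑ ∂ν := enorm_integral_le_lintegral_enorm _

-- Outside the sets `G ⁻¹' Icc (-k) k`, where `G` is bounded, the hypothesis may compare junk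
-- values `0` of non-integrable Bochner integrals; hence the exhaustion by those sets.
lemma lintegral_enorm_le_of_setIntegral_preimage_eq [IsFiniteMeasure ν] (hG : Measurable G)
    (h : ∀ s, MeasurableSet s → ∫ x in G ⁻¹' s, G x ∂ν = ∫ x in G ⁻¹' s, f x ∂ν) :
    ∫⁻ x, ‖G x‖ₑ ∂ν ≤ ∫⁻ x, ‖f x‖ₑ ∂ν := by
  have hint : ∀ a b : ℝ, IntegrableOn G (G ⁻¹' Icc a b) ν := fun a b =>
    Measure.integrableOn_of_bounded (M := max |a| |b|) (measure_ne_top _ _)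
      hG.aestronglyMeasurable
      ((ae_restrict_mem (hG measurableSet_Icc)).mono fun _ hx => abs_le_max_abs_abs hx.1 hx.2)
  have hpos : ∀ k : ℝ, ∫⁻ x in G ⁻¹' Icc 0 k, ‖G x‖ₑ ∂ν ≤ ∫⁻ x in G ⁻¹' Icc 0 k, ‖f x‖ₑ ∂ν :=
    fun k => lintegral_enorm_le_of_integral_eq (hint 0 k)
      ((ae_restrict_mem (hG measurableSet_Icc)).mono fun _ hx => hx.1) (h _ measurableSet_Icc)
  have hneg : ∀ k : ℝ,
      ∫⁻ x in G ⁻¹' Ico (-k) 0, ‖G x‖ₑ ∂ν ≤ ∫⁻ x in G ⁻¹' Ico (-k) 0, ‖f x‖ₑ ∂ν := by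
    intro k
    simpa using lintegral_enorm_le_of_integral_eq (G := -G) (f := -f)
      ((hint (-k) 0).mono_set (preimage_mono Ico_subset_Icc_self)).neg
      ((ae_restrict_mem (hG measurableSet_Ico)).mono fun x hx => neg_nonneg.2 hx.2.le)
      (by simp only [Pi.neg_apply, integral_neg, h _ measurableSet_Ico])
  have hsym : ∀ k : ℕ, ∫⁻ x in G ⁻¹' Icc (-k : ℝ) k, ‖G x‖ₑ ∂ν ≤ ∫⁻ x, ‖f x‖ₑ ∂ν := by
    intro k
    have hsplit : G ⁻¹' Icc (-k : ℝ) k = G ⁻¹' Ico (-k : ℝ) 0 ∪ G ⁻¹' Icc 0 k := by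
      rw [← preimage_union, Ico_union_Icc_eq_Icc (by simp) (by simp)]
    have hdisj : Disjoint (G ⁻¹' Ico (-k : ℝ) 0) (G ⁻¹' Icc 0 k) :=
      disjoint_left.2 fun _ h₁ h₂ => (lt_irrefl _) (h₁.2.trans_le h₂.1)
    rw [hsplit, lintegral_union (hG measurableSet_Icc) hdisj]
    calc _ ≤ ∫⁻ x in G ⁻¹' Ico (-k : ℝ) 0, ‖f x‖ₑ ∂ν + ∫⁻ x in G ⁻¹' Icc 0 k, ‖f x‖ₑ ∂ν :=
          add_le_add (hneg k) (hpos k)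
      _ = ∫⁻ x in G ⁻¹' Ico (-k : ℝ) 0 ∪ G ⁻¹' Icc 0 k, ‖f x‖ₑ ∂ν :=
          (lintegral_union (hG measurableSet_Icc) hdisj).symm
      _ ≤ ∫⁻ x, ‖f x‖ₑ ∂ν := setLIntegral_le_lintegral _ _
  have hexhaust : (⋃ k : ℕ, G ⁻¹' Icc (-k : ℝ) k) = univ :=
    iUnion_eq_univ_iff.2 fun x => ⟨⌈|G x|⌉₊, abs_le.1 (Nat.le_ceil _)⟩
  have hmono : Monotone fun k : ℕ => G ⁻¹' Icc (-k : ℝ) k := fun a b hab =>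
    preimage_mono (Icc_subset_Icc (by simpa using hab) (by simpa using hab))
  rw [← setLIntegral_univ, ← hexhaust, setLIntegral_iUnion_of_directed _ hmono.directed_le]
  exact iSup_le hsym

end Truncation

namespace IsRegCurve

variable {X α Ω₁ : Type*} [MeasurableSpace X] [MeasurableSpace α] [MeasurableSpace Ω₁]

lemma lintegral_enorm_le {ν : Measure (Ω₁ × ℝ)} [IsFiniteMeasure ν] {g : Ω₁ → ℝ}
    (h : IsRegCurve ν g) (hg : Measurable g) :
    ∫⁻ x, ‖g x.1‖ₑ ∂ν ≤ ∫⁻ x, ‖x.2‖ₑ ∂ν :=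
  lintegral_enorm_le_of_setIntegral_preimage_eq (hg.comp measurable_fst)
    fun _ hs => (h.2 _ (hg hs)).symm

variable {μ : Measure α} [SFinite μ] {κ : Kernel α (Ω₁ × ℝ)} [IsFiniteKernel κ]
  {g : α → Ω₁ → ℝ}

lemma integrable_compProd (h : ∀ a, IsRegCurve (κ a) (g a)) (hg : Measurable (Function.uncurry g))
    (hint : Integrable (fun z => z.2.2) (μ ⊗ₘ κ)) :
    Integrable (fun z => g z.1 z.2.1) (μ ⊗ₘ κ) := by
  have hgz : Measurable fun z : α × (Ω₁ × ℝ) => g z.1 z.2.1 :=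
    hg.comp (measurable_fst.prodMk measurable_snd.fst)
  refine ⟨hgz.aestronglyMeasurable, ?_⟩
  calc ∫⁻ z, ‖g z.1 z.2.1‖ₑ ∂(μ ⊗ₘ κ) = ∫⁻ a, ∫⁻ x, ‖g a x.1‖ₑ ∂κ a ∂μ :=
        Measure.lintegral_compProd hgz.enorm
    _ ≤ ∫⁻ a, ∫⁻ x, ‖x.2‖ₑ ∂κ a ∂μ :=
        lintegral_mono fun a => (h a).lintegral_enorm_le hg.of_uncurry_left
    _ = ∫⁻ z, ‖z.2.2‖ₑ ∂(μ ⊗ₘ κ) := (Measure.lintegral_compProd measurable_snd.snd.enorm).symm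
    _ < ⊤ := hint.2

lemma setIntegral_compProd (h : ∀ a, IsRegCurve (κ a) (g a))
    (hg : Measurable (Function.uncurry g)) (hint : Integrable (fun z => z.2.2) (μ ⊗ₘ κ))
    {B : Set (α × Ω₁)} (hB : MeasurableSet B) :
    ∫ z in {z | (z.1, z.2.1) ∈ B}, g z.1 z.2.1 ∂(μ ⊗ₘ κ)
      = ∫ z in {z | (z.1, z.2.1) ∈ B}, z.2.2 ∂(μ ⊗ₘ κ) := by
  have hS : MeasurableSet {z : α × (Ω₁ × ℝ) | (z.1, z.2.1) ∈ B} :=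
    (measurable_fst.prodMk measurable_snd.fst) hB
  rw [← integral_indicator hS, ← integral_indicator hS,
    Measure.integral_compProd ((integrable_compProd h hg hint).indicator hS),
    Measure.integral_compProd (hint.indicator hS)]
  refine integral_congr_ae (ae_of_all _ fun a => ?_)
  have hBa : MeasurableSet (Prod.fst ⁻¹' (Prod.mk a ⁻¹' B) : Set (Ω₁ × ℝ)) :=
    measurable_fst (measurable_prodMk_left hB)
  change ∫ x, (Prod.fst ⁻¹' (Prod.mk a ⁻¹' B)).indicator (fun x => g a x.1) x ∂κ a
    = ∫ x, (Prod.fst ⁻¹' (Prod.mk a ⁻¹' B)).indicator (fun x => x.2) x ∂κ a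
  rw [integral_indicator hBa, integral_indicator hBa]
  exact ((h a).2 _ (measurable_prodMk_left hB)).symm

theorem ae_eq_condExp_of_map_eq_compProd (h : ∀ a, IsRegCurve (κ a) (g a))
    (hg : Measurable (Function.uncurry g)) {P : Measure X} [IsFiniteMeasure P]
    {φ : X → α × (Ω₁ × ℝ)} (hφ : Measurable φ) (hP : P.map φ = μ ⊗ₘ κ)
    (hint : Integrable (fun x => (φ x).2.2) P) :
    (fun x => g (φ x).1 (φ x).2.1) =ᵐ[P]
      P[fun x => (φ x).2.2 |
        MeasurableSpace.comap (fun x => ((φ x).1, (φ x).2.1)) inferInstance] := by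
  set ψ : α × (Ω₁ × ℝ) → α × Ω₁ := fun z => (z.1, z.2.1)
  have hψ : Measurable ψ := measurable_fst.prodMk measurable_snd.fst
  have hintz : Integrable (fun z => z.2.2) (μ ⊗ₘ κ) := by
    rw [← hP]
    exact (integrable_map_measure measurable_snd.snd.aestronglyMeasurable hφ.aemeasurable).2 hint
  have hgint : Integrable (fun x => g (φ x).1 (φ x).2.1) P := by
    refine (integrable_map_measure ?_ hφ.aemeasurable).1 (hP ▸ integrable_compProd h hg hintz)
    exact (hg.comp hψ).aestronglyMeasurable
  refine ae_eq_condExp_of_forall_setIntegral_eq (hψ.comp hφ).comap_le hint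
    (fun _ _ _ => hgint.integrableOn) ?_ (hg.comp (comap_measurable (ψ ∘ φ))).aestronglyMeasurable
  rintro _ ⟨B, hB, rfl⟩ -
  calc ∫ x in ψ ∘ φ ⁻¹' B, g (φ x).1 (φ x).2.1 ∂P
      = ∫ z in ψ ⁻¹' B, g z.1 z.2.1 ∂(P.map φ) :=
        (setIntegral_map (hψ hB) (hg.comp hψ).aestronglyMeasurable hφ.aemeasurable).symm
    _ = ∫ z in ψ ⁻¹' B, z.2.2 ∂(P.map φ) := by rw [hP]; exact setIntegral_compProd h hg hintz hB
    _ = ∫ x in ψ ∘ φ ⁻¹' B, (φ x).2.2 ∂P :=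
        setIntegral_map (hψ hB) measurable_snd.snd.aestronglyMeasurable hφ.aemeasurable

end IsRegCurve

lemma integrable_of_lintegral_sq_ne_top {α : Type*} [MeasurableSpace α] {ν : Measure α}
    [IsFiniteMeasure ν] {f : α → ℝ} (hf : AEStronglyMeasurable f ν)
    (h : ∫⁻ x, ENNReal.ofReal (f x ^ 2) ∂ν ≠ ⊤) : Integrable f ν :=
  ((memLp_two_iff_integrable_sq hf).2 ⟨hf.pow 2,
    (hasFiniteIntegral_iff_ofReal (ae_of_all _ fun x => sq_nonneg (f x))).2 h.lt_top⟩).integrable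
    one_le_two

lemma MeasureTheory.Measure.map_compProd_comap_snd {α β γ : Type*} [MeasurableSpace α]
    [MeasurableSpace β] [MeasurableSpace γ] (μ : Measure α) [SFinite μ] (κ : Kernel α β)
    [IsSFiniteKernel κ] (η : Kernel β γ) [IsSFiniteKernel η] :
    ((μ ⊗ₘ κ) ⊗ₘ η.comap Prod.snd measurable_snd).map (fun q => (q.1.1, q.2))
      = μ ⊗ₘ (η ∘ₖ κ) := by
  refine Measure.ext_of_lintegral _ fun F hF => ?_
  have hF' : Measurable fun q : (α × β) × γ => F (q.1.1, q.2) := hF.comp (by fun_prop)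
  rw [lintegral_map hF (by fun_prop), Measure.lintegral_compProd hF',
    Measure.lintegral_compProd (hF'.lintegral_kernel_prod_right'), Measure.lintegral_compProd hF]
  refine lintegral_congr fun a => ?_
  rw [Kernel.lintegral_comp _ _ _ (by fun_prop)]
  rfl

lemma IsPosterior.map_swap_compProd {Θ α : Type*} [MeasurableSpace Θ] [MeasurableSpace α]
    {Q : Measure Θ} [IsFiniteMeasure Q] {S : Kernel Θ α} [IsMarkovKernel S] {post : Kernel α Θ}
    [IsMarkovKernel post] (hp : IsPosterior Q S post) :
    (Q ⊗ₘ S).map Prod.swap = (S ∘ₘ Q) ⊗ₘ post := by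
  refine ext_of_generate_finite _ generateFrom_prod.symm isPiSystem_prod ?_ ?_
  · rintro _ ⟨A', hA', T, hT, rfl⟩
    rw [Measure.map_apply measurable_swap (hA'.prod hT), preimage_swap_prod,
      Measure.compProd_apply_prod hT hA', Measure.compProd_apply_prod hA' hT]
    exact hp A' T hA' hT
  · rw [Measure.map_apply measurable_swap MeasurableSet.univ, preimage_univ,
      Measure.compProd_apply_univ, Measure.compProd_apply_univ,
      Measure.bind_apply MeasurableSet.univ S.aemeasurable]
    simp

section PiM

variable {Θ Ω₁ Ω₂ α : Type*} [MeasurableSpace Θ] [MeasurableSpace Ω₁] [MeasurableSpace Ω₂]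
  [MeasurableSpace α] (Q : Measure Θ) [SFinite Q] (S : Kernel Θ α) [IsSFiniteKernel S]
  (R : Kernel Θ (Ω₁ × Ω₂)) [IsSFiniteKernel R]

lemma lintegral_PiM {F : α × (Ω₁ × Ω₂) × Θ → ℝ≥0∞} (hF : Measurable F) :
    ∫⁻ p, F p ∂PiM Q S R = ∫⁻ θ, ∫⁻ a, ∫⁻ x, F (a, x, θ) ∂(R θ) ∂(S θ) ∂Q := by
  rw [PiM, lintegral_map hF (by fun_prop), Measure.lintegral_compProd (by fun_prop)]
  refine lintegral_congr fun θ => ?_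
  rw [Kernel.prod_apply, lintegral_prod _ (by fun_prop)]

lemma PiM_map_prodMap {β : Type*} [MeasurableSpace β] {f : α → β} (hf : Measurable f) :
    (PiM Q S R).map (Prod.map f id) = PiM Q (S.map f) R := by
  refine Measure.ext_of_lintegral _ fun F hF => ?_
  rw [lintegral_map hF (by fun_prop), lintegral_PiM _ _ _ (by fun_prop),
    lintegral_PiM _ _ _ hF]
  refine lintegral_congr fun θ => ?_
  rw [Kernel.map_apply _ hf, lintegral_map _ hf]
  · rfl
  · exact Measurable.lintegral_prod_right' (f := fun p => F (p.1, p.2, θ)) (by fun_prop)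

lemma PiM_map_eq_map_swap_compProd :
    (PiM Q S R).map (fun p => ((p.1, p.2.2), p.2.1))
      = (Q ⊗ₘ S).map Prod.swap ⊗ₘ R.comap Prod.snd measurable_snd := by
  refine Measure.ext_of_lintegral _ fun F hF => ?_
  rw [lintegral_map hF (by fun_prop), lintegral_PiM _ _ _ (by fun_prop),
    Measure.lintegral_compProd hF,
    lintegral_map hF.lintegral_kernel_prod_right' measurable_swap,
    Measure.lintegral_compProd]
  · rfl
  · exact hF.lintegral_kernel_prod_right'.comp measurable_swap

end PiM

instance {Θ Ω₁ Ω₂ α : Type*} [MeasurableSpace Θ] [MeasurableSpace Ω₁] [MeasurableSpace Ω₂]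
    [MeasurableSpace α] (Q : Measure Θ) [IsProbabilityMeasure Q] (S : Kernel Θ α)
    [IsMarkovKernel S] (R : Kernel Θ (Ω₁ × Ω₂)) [IsMarkovKernel R] :
    IsProbabilityMeasure (PiM Q S R) :=
  Measure.isProbabilityMeasure_map (by fun_prop)

lemma PiM_map_observation {Θ Ω₁ Ω₂ α : Type*} [MeasurableSpace Θ] [MeasurableSpace Ω₁]
    [MeasurableSpace Ω₂] [MeasurableSpace α] (Q : Measure Θ) [SFinite Q] (S : Kernel Θ α)
    [IsMarkovKernel S] (R : Kernel Θ (Ω₁ × Ω₂)) [IsSFiniteKernel R] :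
    (PiM Q S R).map (fun p => p.2.1) = R ∘ₘ Q := by
  refine Measure.ext_of_lintegral _ fun F hF => ?_
  rw [lintegral_map hF (by fun_prop), lintegral_PiM _ _ _ (by fun_prop),
    Measure.lintegral_bind R.aemeasurable hF.aemeasurable]
  simp

lemma integrable_observation_snd_PiM {Θ Ω₁ α : Type*} [MeasurableSpace Θ] [MeasurableSpace Ω₁]
    [MeasurableSpace α] {Q : Measure Θ} [IsProbabilityMeasure Q] {S : Kernel Θ α}
    [IsMarkovKernel S] {R : Kernel Θ (Ω₁ × ℝ)} [IsMarkovKernel R]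
    (hsq : ∫⁻ θ, ∫⁻ x, ENNReal.ofReal (x.2 ^ 2) ∂(R θ) ∂Q ≠ ⊤) :
    Integrable (fun p => p.2.1.2) (PiM Q S R) := by
  refine (integrable_map_measure (f := fun p : α × (Ω₁ × ℝ) × Θ => p.2.1)
    (g := fun x : Ω₁ × ℝ => x.2) measurable_snd.aestronglyMeasurable (by fun_prop)).1 ?_
  rw [PiM_map_observation]
  refine integrable_of_lintegral_sq_ne_top measurable_snd.aestronglyMeasurable ?_
  rwa [Measure.lintegral_bind R.aemeasurable (by fun_prop)]

namespace IsPosterior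

variable {Θ Ω₁ Ω₂ α β : Type*} [MeasurableSpace Θ] [MeasurableSpace Ω₁] [MeasurableSpace Ω₂]
  [MeasurableSpace α] [MeasurableSpace β] {Q : Measure Θ} [IsFiniteMeasure Q] {S : Kernel Θ α}
  [IsSFiniteKernel S] {R : Kernel Θ (Ω₁ × Ω₂)} [IsSFiniteKernel R] {f : α → β}
  {S' : Kernel Θ β} [IsMarkovKernel S'] {post : Kernel β Θ} [IsMarkovKernel post]

lemma PiM_map_eq_compProd (hp : IsPosterior Q S' post) (hf : Measurable f)
    (hS : ∀ θ, (S θ).map f = S' θ) :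
    (PiM Q S R).map (fun p => ((f p.1, p.2.2), p.2.1))
      = ((S' ∘ₘ Q) ⊗ₘ post) ⊗ₘ R.comap Prod.snd measurable_snd := by
  have hS' : S.map f = S' := Kernel.ext fun θ => by rw [Kernel.map_apply _ hf, hS]
  rw [← hp.map_swap_compProd, ← PiM_map_eq_map_swap_compProd, ← hS', ← PiM_map_prodMap _ _ _ hf,
    Measure.map_map (by fun_prop) (by fun_prop)]
  rfl

lemma PiM_map_eq_compProd_comp (hp : IsPosterior Q S' post) (hf : Measurable f)
    (hS : ∀ θ, (S θ).map f = S' θ) :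
    (PiM Q S R).map (fun p => (f p.1, p.2.1)) = (S' ∘ₘ Q) ⊗ₘ (R ∘ₖ post) := by
  rw [← Measure.map_compProd_comap_snd, ← hp.PiM_map_eq_compProd hf hS,
    Measure.map_map (by fun_prop) (by fun_prop)]
  rfl

end IsPosterior

/-- Lemma, part (i): with `Y(x',x,θ) := E_{R_θ}(p₂ | p₁ = x₁)`, the regression
curve of `p₂` on `p₁` with respect to the posterior predictive distribution based on the first
`n` observations is, `Π_ℕ`-a.e., the conditional expectation of `Y` under `Π_ℕ` given the first
`n` sample coordinates and the first coordinate of the new observation. -/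
theorem stmt_3 {Θ Ω₁ : Type*} [MeasurableSpace Θ] [MeasurableSpace Ω₁]
    (Q : Measure Θ) [IsProbabilityMeasure Q]
    (R : Kernel Θ (Ω₁ × ℝ)) [IsMarkovKernel R]
    (hsq : ∫⁻ θ, ∫⁻ x, ENNReal.ofReal (x.2 ^ 2) ∂(R θ) ∂Q ≠ ⊤)
    (Rn : (n : ℕ) → Kernel Θ (Fin n → Ω₁ × ℝ)) [∀ n, IsMarkovKernel (Rn n)]
    (hRn : ∀ n θ, Rn n θ = Measure.pi fun _ : Fin n => R θ)
    (Rinf : Kernel Θ (ℕ → Ω₁ × ℝ)) [IsMarkovKernel Rinf]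
    (hRinf : ∀ θ n, (Rinf θ).map (fun x (i : Fin n) => x i) = Measure.pi fun _ : Fin n => R θ)
    (r : Θ → Ω₁ → ℝ) (hr_meas : Measurable (Function.uncurry r))
    (hr : ∀ θ, IsRegCurve (R θ) (r θ))
    (postn : (n : ℕ) → Kernel (Fin n → Ω₁ × ℝ) Θ) [∀ n, IsMarkovKernel (postn n)]
    (hpostn : ∀ n, IsPosterior Q (Rn n) (postn n))
    (mstar : (n : ℕ) → (Fin n → Ω₁ × ℝ) → Ω₁ → ℝ)
    (hmstar_meas : ∀ n, Measurable (Function.uncurry (mstar n)))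
    (hmstar : ∀ n x', IsRegCurve (Measure.bind (postn n x') fun θ => R θ) (mstar n x'))
    (n : ℕ) :
    (fun p : (ℕ → Ω₁ × ℝ) × (Ω₁ × ℝ) × Θ => mstar n (fun i : Fin n => p.1 i) p.2.1.1)
      =ᵐ[PiM Q Rinf R]
    (PiM Q Rinf R)[fun p : (ℕ → Ω₁ × ℝ) × (Ω₁ × ℝ) × Θ => r p.2.2 p.2.1.1 |
      MeasurableSpace.comap (fun p : (ℕ → Ω₁ × ℝ) × (Ω₁ × ℝ) × Θ =>
        ((fun i : Fin n => p.1 i), p.2.1.1)) inferInstance] := by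
  have hrestr : Measurable fun x : ℕ → Ω₁ × ℝ => fun i : Fin n => x i := by fun_prop
  have hS : ∀ θ, (Rinf θ).map (fun x (i : Fin n) => x i) = Rn n θ := fun θ => by
    rw [hRinf, hRn]
  have hY := IsRegCurve.ae_eq_condExp_of_map_eq_compProd
    (g := fun q : (Fin n → Ω₁ × ℝ) × Θ => r q.2) (fun q => hr q.2)
    (hr_meas.comp (f := fun p : ((Fin n → Ω₁ × ℝ) × Θ) × Ω₁ => (p.1.2, p.2)) (by fun_prop))
    (by fun_prop) ((hpostn n).PiM_map_eq_compProd hrestr hS) (integrable_observation_snd_PiM hsq)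
  have hM := IsRegCurve.ae_eq_condExp_of_map_eq_compProd
    (fun y => by rw [Kernel.comp_apply]; exact hmstar n y) (hmstar_meas n) (by fun_prop)
    ((hpostn n).PiM_map_eq_compProd_comp hrestr hS) (integrable_observation_snd_PiM hsq)
  have hle : MeasurableSpace.comap (fun p : (ℕ → Ω₁ × ℝ) × (Ω₁ × ℝ) × Θ =>
        ((fun i : Fin n => p.1 i), p.2.1.1)) inferInstance
      ≤ MeasurableSpace.comap (fun p : (ℕ → Ω₁ × ℝ) × (Ω₁ × ℝ) × Θ =>
        (((fun i : Fin n => p.1 i), p.2.2), p.2.1.1)) inferInstance :=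
    ((by fun_prop : Measurable fun q : ((Fin n → Ω₁ × ℝ) × Θ) × Ω₁ => (q.1.1, q.2)).comp
      (comap_measurable fun p : (ℕ → Ω₁ × ℝ) × (Ω₁ × ℝ) × Θ =>
        (((fun i : Fin n => p.1 i), p.2.2), p.2.1.1))).comap_le
  exact hM.trans ((condExp_congr_ae hY).trans
    (condExp_condExp_of_le hle (by fun_prop : Measurable _).comap_le)).symm
end

section
/- Assume (i) $(\Omega_1,\mathcal{A}_1)$ is a standard Borel space, (ii) $\Theta$ is a Borel subset of a Polish space with its Borel $\sigma$-field, and (iii) $\{R_\theta : \theta \in \Theta\}$ is identifiable. Then the regression curve with respect to the posterior predictive distribution based on the whole infinite sample equals the sampling regression curve: $E_{(R^*_{\mathbb{N},x'})^R}(p_2 \mid p_1 = x_1) = E_{R_\theta}(p_2 \mid p_1 = x_1)$ for $\Pi_{\mathbb{N}}$-almost every $(x',x,\theta)$, where $x_1$ is the first coordinate of $x$. -/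
open MeasureTheory ProbabilityTheory Filter
open scoped ENNReal

/-!
Each `θ` can be read off almost surely from an infinite i.i.d. sample: by the strong law of large
numbers the empirical frequencies of the sets `embeddingReal ⁻¹' (-∞, q]`, `q ∈ ℚ`, converge to
their `R_θ`-probabilities, these countably many numbers determine `R_θ`, and by identifiability
and the Lusin–Souslin theorem `θ` depends measurably on them. The posterior given the whole
sample is then almost surely the Dirac mass at the true parameter, so the posterior predictive
distribution is `R_θ` and its regression curve is the sampling one.
-/

open Topology

open Set in
theorem MeasureTheory.Measure.eq_infinitePi_of_map_restrict_fin {E : Type*} [MeasurableSpace E]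
    {μ : Measure E} [IsProbabilityMeasure μ] {ν : Measure (ℕ → E)}
    (h : ∀ n, ν.map (fun x (i : Fin n) => x i) = Measure.pi fun _ => μ) :
    ν = Measure.infinitePi fun _ => μ := by
  classical
  refine Measure.eq_infinitePi _ fun s t ht => ?_
  obtain ⟨n, hsn⟩ : ∃ n, s ⊆ Finset.range n := ⟨s.sup id + 1, fun i hi =>
    Finset.mem_range.2 (Nat.lt_succ_of_le (Finset.le_sup (f := id) hi))⟩
  have hbox : (s : Set ℕ).pi t = (fun x (i : Fin n) => x i) ⁻¹'
      univ.pi fun i : Fin n => if (i : ℕ) ∈ s then t i else univ := by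
    ext x
    simp only [Set.mem_pi, Finset.mem_coe, mem_preimage, mem_univ, true_implies]
    refine ⟨fun hx i => ?_, fun hx i hi => ?_⟩
    · split_ifs with hi
      exacts [hx i hi, mem_univ _]
    · simpa [hi] using hx ⟨i, Finset.mem_range.1 (hsn hi)⟩
  rw [hbox, ← Measure.map_apply (by fun_prop)
    (.univ_pi fun i => by split_ifs; exacts [ht i, .univ]), h, Measure.pi_pi]
  simp only [apply_ite, measure_univ]
  rw [Fin.prod_univ_eq_prod_range (fun i => if i ∈ s then μ (t i) else 1), Finset.prod_ite_mem,
    Finset.inter_eq_right.2 hsn]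

theorem ae_tendsto_frequency_infinitePi {E : Type*} [MeasurableSpace E]
    (μ : Measure E) [IsProbabilityMeasure μ] {s : Set E} (hs : MeasurableSet s) :
    ∀ᵐ x ∂(Measure.infinitePi fun _ : ℕ => μ),
      Tendsto (fun n : ℕ => (∑ i ∈ Finset.range n, s.indicator (1 : E → ℝ) (x i)) / n) atTop
        (𝓝 (μ.real s)) := by
  have hf : Measurable (s.indicator (1 : E → ℝ)) := measurable_one.indicator hs
  have hlaw : ∀ i, MeasurePreserving (fun x : ℕ → E => x i)
      (Measure.infinitePi fun _ => μ) μ := measurePreserving_eval_infinitePi _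
  have hmean :
      ∫ x, s.indicator (1 : E → ℝ) (x 0) ∂(Measure.infinitePi fun _ => μ) = μ.real s := by
    rw [← integral_map (hlaw 0).aemeasurable hf.aestronglyMeasurable, (hlaw 0).map_eq,
      integral_indicator_one hs]
  rw [← hmean]
  refine strong_law_ae_real (μ := Measure.infinitePi fun _ => μ)
    (fun i x => s.indicator (1 : E → ℝ) (x i)) ?_ (fun i j hij => ?_) fun i => ?_
  · exact (integrable_const (1 : ℝ)).mono' (hf.comp (hlaw 0).measurable).aestronglyMeasurable
      (.of_forall fun x => by by_cases h : x 0 ∈ s <;> simp [h])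
  · exact (iIndepFun_infinitePi (P := fun _ => μ) (X := fun _ => s.indicator (1 : E → ℝ))
      fun _ => hf).indepFun hij
  · exact IdentDistrib.comp ⟨(hlaw i).aemeasurable, (hlaw 0).aemeasurable,
      (hlaw i).map_eq.trans (hlaw 0).map_eq.symm⟩ hf

open Set in
theorem MeasureTheory.Measure.ext_of_real_preimage_embeddingReal_Iic {E : Type*}
    [MeasurableSpace E] [StandardBorelSpace E] {μ ν : Measure E} [IsProbabilityMeasure μ]
    [IsProbabilityMeasure ν]
    (h : ∀ q : ℚ,
      μ.real (embeddingReal E ⁻¹' Iic (q : ℝ)) = ν.real (embeddingReal E ⁻¹' Iic (q : ℝ))) :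
    μ = ν := by
  have hf := measurableEmbedding_embeddingReal E
  suffices μ.map (embeddingReal E) = ν.map (embeddingReal E) by
    rw [← hf.comap_map μ, this, hf.comap_map]
  refine ext_of_generate_finite _ Real.borel_eq_generateFrom_Iic_rat Real.isPiSystem_Iic_rat ?_ ?_
  · simp only [mem_iUnion, mem_singleton_iff]
    rintro _ ⟨q, rfl⟩
    rw [Measure.map_apply hf.measurable measurableSet_Iic,
      Measure.map_apply hf.measurable measurableSet_Iic]
    exact (measureReal_eq_measureReal_iff (measure_ne_top _ _) (measure_ne_top _ _)).1 (h q)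
  · simp [Measure.map_apply hf.measurable .univ]

open Set in
theorem exists_measurable_consistent_estimator {Θ E : Type*} [MeasurableSpace Θ]
    [StandardBorelSpace Θ] [Nonempty Θ] [MeasurableSpace E] [StandardBorelSpace E]
    (R : Kernel Θ E) [IsMarkovKernel R] (hR : Function.Injective fun θ => R θ) :
    ∃ g : (ℕ → E) → Θ, Measurable g ∧
      ∀ θ, ∀ᵐ x ∂(Measure.infinitePi fun _ : ℕ => R θ), g x = θ := by
  set s : ℚ → Set E := fun q => embeddingReal E ⁻¹' Iic (q : ℝ)
  have hs q : MeasurableSet (s q) :=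
    (measurableEmbedding_embeddingReal E).measurable measurableSet_Iic
  set φ : Θ → ℚ → ℝ := fun θ q => (R θ).real (s q)
  have hφ : MeasurableEmbedding φ := by
    refine Measurable.measurableEmbedding
      (measurable_pi_lambda _ fun q => (R.measurable_coe (hs q)).ennreal_toReal) fun θ θ' h => ?_
    exact hR (Measure.ext_of_real_preimage_embeddingReal_Iic fun q => congrFun h q)
  obtain ⟨ψ, hψ, hψφ⟩ := hφ.exists_measurable_extend measurable_id fun _ => inferInstance
  -- `liminf` is an everywhere defined, measurable stand-in for the a.s. limit of the frequencies
  set freq : (ℕ → E) → ℚ → ℝ := fun x q =>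
    liminf (fun n : ℕ => (∑ i ∈ Finset.range n, (s q).indicator (1 : E → ℝ) (x i)) / n) atTop
  refine ⟨ψ ∘ freq, hψ.comp (measurable_pi_lambda _ fun q => Measurable.liminf fun n => ?_),
    fun θ => ?_⟩
  · exact (Finset.measurable_sum _ fun i _ =>
      (measurable_one.indicator (hs q)).comp (measurable_pi_apply i)).div_const _
  · have hfreq : ∀ᵐ x ∂(Measure.infinitePi fun _ : ℕ => R θ), ∀ q, freq x q = φ θ q :=
      ae_all_iff.2 fun q => (ae_tendsto_frequency_infinitePi (R θ) (hs q)).mono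
        fun x hx => hx.liminf_eq
    filter_upwards [hfreq] with x hx
    rw [Function.comp_apply, funext hx]
    exact congrFun hψφ θ

section Posterior

variable {Θ α : Type*} [MeasurableSpace Θ] [MeasurableSpace α] {Q : Measure Θ}
  {S : Kernel Θ α}

theorem IsPosterior.compProd_eq_map_swap [IsFiniteMeasure Q] [IsFiniteKernel S]
    {post : Kernel α Θ} [IsFiniteKernel post] (h : IsPosterior Q S post) :
    (S ∘ₘ Q) ⊗ₘ post = (Q ⊗ₘ S).map Prod.swap := by
  refine ext_of_generate_finite _ generateFrom_prod.symm isPiSystem_prod ?_ ?_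
  · rintro _ ⟨A', hA', T, hT, rfl⟩
    rw [Measure.compProd_apply_prod hA' hT, Measure.map_apply measurable_swap (hA'.prod hT),
      Set.preimage_swap_prod, Measure.compProd_apply_prod hT hA']
    exact (h A' T hA' hT).symm
  · rw [← Set.univ_prod_univ, Measure.compProd_apply_prod .univ .univ,
      Measure.map_apply measurable_swap (MeasurableSet.univ.prod .univ), Set.preimage_swap_prod,
      Measure.compProd_apply_prod .univ .univ]
    exact (h _ _ .univ .univ).symm

theorem compProd_deterministic_eq_map_swap [MeasurableEq Θ] [SFinite Q] [IsSFiniteKernel S]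
    {g : α → Θ} (hg : Measurable g) (hgS : ∀ θ, ∀ᵐ x ∂(S θ), g x = θ) :
    (S ∘ₘ Q) ⊗ₘ Kernel.deterministic g hg = (Q ⊗ₘ S).map Prod.swap := by
  rw [Measure.compProd_deterministic, ← Measure.snd_compProd, Measure.snd,
    Measure.map_map (by fun_prop) measurable_snd]
  refine Measure.map_congr ((Measure.ae_compProd_of_ae_ae (p := fun p => g p.2 = p.1)
    (measurableSet_eq_fun (by fun_prop) (by fun_prop)) (.of_forall hgS)).mono fun p hp => ?_)
  simp only [Function.comp_apply, hp, Prod.swap]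

theorem IsPosterior.ae_ae_eq_dirac [MeasurableSpace.CountableOrCountablyGenerated α Θ]
    [MeasurableEq Θ] [IsFiniteMeasure Q] [IsFiniteKernel S] {post : Kernel α Θ}
    [IsFiniteKernel post] (h : IsPosterior Q S post) {g : α → Θ} (hg : Measurable g)
    (hgS : ∀ θ, ∀ᵐ x ∂(S θ), g x = θ) :
    ∀ᵐ θ ∂Q, ∀ᵐ x ∂(S θ), post x = Measure.dirac θ := by
  have hpost : post =ᵐ[S ∘ₘ Q] Kernel.deterministic g hg := Kernel.ae_eq_of_compProd_eq
    (h.compProd_eq_map_swap.trans (compProd_deterministic_eq_map_swap hg hgS).symm)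
  filter_upwards [Measure.ae_ae_of_ae_comp hpost] with θ hθ
  filter_upwards [hθ, hgS θ] with x hx hgx
  rw [hx, Kernel.deterministic_apply, hgx]

end Posterior

theorem ae_PiM_of_ae_ae_ae {Θ Ω₁ Ω₂ α : Type*} [MeasurableSpace Θ] [MeasurableSpace Ω₁]
    [MeasurableSpace Ω₂] [MeasurableSpace α] {Q : Measure Θ} {S : Kernel Θ α}
    [IsSFiniteKernel S] {R : Kernel Θ (Ω₁ × Ω₂)} [IsSFiniteKernel R]
    {P : α × (Ω₁ × Ω₂) × Θ → Prop} (hP : MeasurableSet {p | P p})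
    (h : ∀ᵐ θ ∂Q, ∀ᵐ a ∂(S θ), ∀ᵐ x ∂(R θ), P (a, x, θ)) :
    ∀ᵐ p ∂PiM Q S R, P p := by
  have hφ : Measurable fun p : Θ × α × (Ω₁ × Ω₂) => (p.2.1, p.2.2, p.1) := by fun_prop
  rw [PiM, ae_map_iff hφ.aemeasurable hP]
  refine Measure.ae_compProd_of_ae_ae (hφ hP) ?_
  filter_upwards [h] with θ hθ
  rw [Kernel.prod_apply]
  exact (Measure.ae_prod_iff_ae_ae (p := fun b => P (b.1, b.2, θ))
    (measurable_prodMk_left (hφ hP))).2 hθ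

theorem IsRegCurve.ae_eq {Ω₁ : Type*} [MeasurableSpace Ω₁] {ν : Measure (Ω₁ × ℝ)}
    [IsFiniteMeasure ν] {g₁ g₂ : Ω₁ → ℝ} (hg₁ : Measurable g₁) (hg₂ : Measurable g₂)
    (h₁ : IsRegCurve ν g₁) (h₂ : IsRegCurve ν g₂) :
    ∀ᵐ x ∂ν, g₁ x.1 = g₂ x.1 := by
  set ν₁ := ν.map Prod.fst
  have hset A (hA : MeasurableSet A) : ∫ y in A, g₁ y ∂ν₁ = ∫ y in A, g₂ y ∂ν₁ := by
    rw [setIntegral_map hA hg₁.aestronglyMeasurable measurable_fst.aemeasurable,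
      setIntegral_map hA hg₂.aestronglyMeasurable measurable_fst.aemeasurable,
      ← h₁.2 A hA, ← h₂.2 A hA]
  -- `g₁` and `g₂` are not assumed integrable: compare them where both are bounded by `n`
  set B : ℕ → Set Ω₁ := fun n => {y | |g₁ y| ≤ n ∧ |g₂ y| ≤ n}
  have hB n : MeasurableSet (B n) :=
    (measurableSet_le hg₁.abs measurable_const).inter (measurableSet_le hg₂.abs measurable_const)
  have hBn n : ∀ᵐ y ∂ν₁.restrict (B n), g₁ y = g₂ y := by
    have hint (g : Ω₁ → ℝ) (hg : Measurable g) (hbd : ∀ y ∈ B n, |g y| ≤ n) :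
        Integrable g (ν₁.restrict (B n)) :=
      (integrable_const (n : ℝ)).mono' hg.aestronglyMeasurable
        ((ae_restrict_mem (hB n)).mono fun y hy => hbd y hy)
    refine Integrable.ae_eq_of_forall_setIntegral_eq _ _ (hint g₁ hg₁ fun y hy => hy.1)
      (hint g₂ hg₂ fun y hy => hy.2) fun s hs _ => ?_
    rw [Measure.restrict_restrict hs]
    exact hset _ (hs.inter (hB n))
  have hcover : ⋃ n, B n = Set.univ := Set.iUnion_eq_univ_iff.2 fun y =>
    (exists_nat_ge (max |g₁ y| |g₂ y|)).imp fun n hn => max_le_iff.1 hn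
  have hν₁ : ∀ᵐ y ∂ν₁, g₁ y = g₂ y := by
    rw [← Measure.restrict_univ (μ := ν₁), ← hcover, ae_restrict_iUnion_iff]
    exact hBn
  exact ae_of_ae_map measurable_fst.aemeasurable hν₁

theorem stmt_8_general {Θ Ω₁ : Type*} [MeasurableSpace Θ] [MeasurableSpace Ω₁]
    [StandardBorelSpace Ω₁] [StandardBorelSpace Θ]
    (Q : Measure Θ) [IsProbabilityMeasure Q]
    (R : Kernel Θ (Ω₁ × ℝ)) [IsMarkovKernel R]
    (hident : Function.Injective fun θ => (R θ : Measure (Ω₁ × ℝ)))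
    (Rinf : Kernel Θ (ℕ → Ω₁ × ℝ)) [IsMarkovKernel Rinf]
    (hRinf : ∀ θ n, (Rinf θ).map (fun x (i : Fin n) => x i) = Measure.pi fun _ : Fin n => R θ)
    (r : Θ → Ω₁ → ℝ) (hr_meas : Measurable (Function.uncurry r))
    (hr : ∀ θ, IsRegCurve (R θ) (r θ))
    (postinf : Kernel (ℕ → Ω₁ × ℝ) Θ) [IsMarkovKernel postinf]
    (hpostinf : IsPosterior Q Rinf postinf)
    (mstarinf : (ℕ → Ω₁ × ℝ) → Ω₁ → ℝ)
    (hmstarinf_meas : Measurable (Function.uncurry mstarinf))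
    (hmstarinf : ∀ x', IsRegCurve (Measure.bind (postinf x') fun θ => R θ) (mstarinf x')) :
    ∀ᵐ p ∂(PiM Q Rinf R), mstarinf p.1 p.2.1.1 = r p.2.2 p.2.1.1 := by
  have : Nonempty Θ := nonempty_of_isProbabilityMeasure Q
  obtain ⟨g, hg, hgθ⟩ := exists_measurable_consistent_estimator R hident
  have hRinf_eq θ : Rinf θ = Measure.infinitePi fun _ => R θ :=
    Measure.eq_infinitePi_of_map_restrict_fin (hRinf θ)
  have hpost := hpostinf.ae_ae_eq_dirac hg fun θ => hRinf_eq θ ▸ hgθ θ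
  refine ae_PiM_of_ae_ae_ae (measurableSet_eq_fun (by fun_prop) (by fun_prop)) ?_
  filter_upwards [hpost] with θ hθ
  filter_upwards [hθ] with x' hx'
  have hpred : (postinf x').bind (fun θ' => R θ') = R θ := by
    rw [hx', Measure.dirac_bind R.measurable]
  exact IsRegCurve.ae_eq (by fun_prop) (by fun_prop) (hpred ▸ hmstarinf x') (hr θ)

/-- under the standard Borel and identifiability conditions, the regression curve
with respect to the posterior predictive distribution based on the whole infinite sample
coincides `Π_ℕ`-a.e. with the sampling regression curve. -/
theorem stmt_8 {Θ Ω₁ : Type*} [MeasurableSpace Θ] [MeasurableSpace Ω₁]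
    [StandardBorelSpace Ω₁] [StandardBorelSpace Θ]
    (Q : Measure Θ) [IsProbabilityMeasure Q]
    (R : Kernel Θ (Ω₁ × ℝ)) [IsMarkovKernel R]
    (hident : Function.Injective fun θ => (R θ : Measure (Ω₁ × ℝ)))
    (hsq : ∫⁻ θ, ∫⁻ x, ENNReal.ofReal (x.2 ^ 2) ∂(R θ) ∂Q ≠ ⊤)
    (Rinf : Kernel Θ (ℕ → Ω₁ × ℝ)) [IsMarkovKernel Rinf]
    (hRinf : ∀ θ n, (Rinf θ).map (fun x (i : Fin n) => x i) = Measure.pi fun _ : Fin n => R θ)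
    (r : Θ → Ω₁ → ℝ) (hr_meas : Measurable (Function.uncurry r))
    (hr : ∀ θ, IsRegCurve (R θ) (r θ))
    (postinf : Kernel (ℕ → Ω₁ × ℝ) Θ) [IsMarkovKernel postinf]
    (hpostinf : IsPosterior Q Rinf postinf)
    (mstarinf : (ℕ → Ω₁ × ℝ) → Ω₁ → ℝ)
    (hmstarinf_meas : Measurable (Function.uncurry mstarinf))
    (hmstarinf : ∀ x', IsRegCurve (Measure.bind (postinf x') fun θ => R θ) (mstarinf x')) :
    ∀ᵐ p ∂(PiM Q Rinf R), mstarinf p.1 p.2.1.1 = r p.2.2 p.2.1.1 :=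
  stmt_8_general Q R hident Rinf hRinf r hr_meas hr postinf hpostinf mstarinf hmstarinf_meas
    hmstarinf
end
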